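/- In a JSBAF without preferences satisfying the Deductive ASPIC⊖ constructibility conditions, the grounded labeling exists and is unique: there is exactly one ground-complete labeling L such that no ground-complete labeling L′ has in(L′) ⊊ in(L); moreover the result of every grounded construction equals this labeling. -/

import Mathlib

/-!
An admissible labeling is determined by its IN-set `I`: legal OUT-chains are exactly derivations
in the OUT-closure `OutCl J I`, so the labeling is `labelOf J I`. Call `I` coherent when it
contains the strict arguments, is disjoint from its OUT-closure, has every attacker of its members
in that closure and is closed under supports; coherent sets give admissible labelings. A successor step of a grounded
construction preserves coherence (a forced-IN argument whose support is not safe would make the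
head IN), and so do unions at limit stages, because supporting sets are finite. Forced-IN
arguments and safe supports stay so in every extension, so each stage lies inside the IN-set of
every ground-complete labeling: the result of any construction is the least ground-complete
labeling. A construction exists since an inflationary iteration indexed by all ordinals must stall.
-/

namespace G

inductive Lab : Type
  | IN | OUT | UNDEC
deriving DecidableEq

/-- A JSBAF without preferences. -/
structure JSB (A : Type) where
  att : A → A → Prop
  supp : Set A → A → Prop

variable {A : Type}

/-- Strict arguments. -/
inductive Strict (J : JSB A) : A → Prop
  | mk (S : Set A) (a : A) (h : J.supp S a) (hS : ∀ b ∈ S, Strict J b) : Strict J a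

/-- One support step: a is in a supporting set of b. -/
def sstep (J : JSB A) (a b : A) : Prop := ∃ S, J.supp S b ∧ a ∈ S

/-- Support path of length ≥ 1. -/
def SPath (J : JSB A) : A → A → Prop := Relation.TransGen (sstep J)

/-- Support children of an argument. -/
def SC (J : JSB A) (B : A) : Set A := {c | SPath J B c}

/-- Constructibility according to Deductive ASPIC⊖ (Definition of 𝔍_{DA⊖}). -/
structure Constructible (J : JSB A) : Prop where
  acyc : ∀ a, ¬ SPath J a a
  uniqSupp : ∀ S S' b, J.supp S b → J.supp S' b → S = S'
  finSupp : ∀ S b, J.supp S b → S.Finite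
  strictUnatt : ∀ a b, Strict J b → ¬ J.att a b

def inL (L : A → Lab) : Set A := {a | L a = Lab.IN}
def outL (L : A → Lab) : Set A := {a | L a = Lab.OUT}

/-- The multiset of labels (under L) of the members of S is ≤ the label l
(Definition of the label ordering): anything ≤ IN; ≤ UNDEC iff S contains an UNDEC or OUT
member; ≤ OUT iff S contains an OUT member or at least two UNDEC members. -/
def mLe (L : A → Lab) (S : Set A) (l : Lab) : Prop :=
  l = Lab.IN ∨
  (l = Lab.UNDEC ∧ ∃ b ∈ S, L b = Lab.UNDEC ∨ L b = Lab.OUT) ∨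
  (l = Lab.OUT ∧ ((∃ b ∈ S, L b = Lab.OUT) ∨
    (∃ b₁ ∈ S, ∃ b₂ ∈ S, b₁ ≠ b₂ ∧ L b₁ = Lab.UNDEC ∧ L b₂ = Lab.UNDEC)))

/-- Legally IN: all attackers OUT, and for every support (S,c) with a ∈ S the multiset of
labels of S ∖ {a} is ≤ the label of c. -/
def legallyIn (J : JSB A) (L : A → Lab) (a : A) : Prop :=
  (∀ b, J.att b a → L b = Lab.OUT) ∧
  ∀ S c, J.supp S c → a ∈ S → mLe L (S \ {a}) (L c)

/-- Legally OUT: an IN attacker, or a support chain starting at a whose heads are all OUT,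
whose last head is attacked by an IN argument, and each of whose supporting sets has exactly
one non-IN member. -/
def legallyOut (J : JSB A) (L : A → Lab) (a : A) : Prop :=
  (∃ b, J.att b a ∧ L b = Lab.IN) ∨
  ∃ (n : ℕ) (S : ℕ → Set A) (b : ℕ → A),
    (∀ i ≤ n, J.supp (S i) (b i)) ∧
    (∀ i < n, b i ∈ S (i + 1)) ∧
    a ∈ S 0 ∧
    (∃ c, J.att c (b n) ∧ L c = Lab.IN) ∧
    (∀ i ≤ n, L (b i) = Lab.OUT) ∧
    (∀ d ∈ S 0, d ≠ a → L d = Lab.IN) ∧ L a ≠ Lab.IN ∧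
    (∀ i, 1 ≤ i → i ≤ n → ∀ d ∈ S i, d ≠ b (i - 1) → L d = Lab.IN)

/-- Admissible labeling: IN arguments are legally IN, OUT exactly the legally OUT, strict
arguments IN. -/
def Admissible (J : JSB A) (L : A → Lab) : Prop :=
  (∀ a, L a = Lab.IN → legallyIn J L a) ∧
  (∀ a, L a = Lab.OUT ↔ legallyOut J L a) ∧
  (∀ a, Strict J a → L a = Lab.IN)

/-- The OUT-closure of a set I of accepted arguments: arguments attacked by I, closed under
supports whose head is rejected and whose other members are all in I. -/
inductive OutCl (J : JSB A) (I : Set A) : A → Prop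
  | att (a b : A) (hb : b ∈ I) (h : J.att b a) : OutCl J I a
  | supp (a : A) (S : Set A) (c : A) (h : J.supp S c) (ha : a ∈ S)
      (hc : OutCl J I c) (hS : ∀ d ∈ S, d ≠ a → d ∈ I) : OutCl J I a

open Classical in
/-- The strict-including-minimal labeling. -/
noncomputable def SIM (J : JSB A) : A → Lab := fun a =>
  if Strict J a then Lab.IN
  else if OutCl J {x | Strict J x} a then Lab.OUT
  else Lab.UNDEC

/-- The 'more informative' relation on labels. -/
def geqp (l' l : Lab) : Prop := l = Lab.UNDEC ∨ l' = l

/-- L' extends L: IN- and OUT-sets are preserved. -/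
def Extends (L L' : A → Lab) : Prop := inL L ⊆ inL L' ∧ outL L ⊆ outL L'

/-- (S,B) is a safe support for X in L: X ∈ S, and on every support chain starting with
(S,B) all heads are attacked only by OUT-labeled arguments. -/
def Safe (J : JSB A) (L : A → Lab) (S : Set A) (B X : A) : Prop :=
  X ∈ S ∧ J.supp S B ∧
  ∀ c, (c = B ∨ SPath J B c) → ∀ D, J.att D c → L D = Lab.OUT

/-- X is forced IN w.r.t. L. -/
def ForcedIn (J : JSB A) (L : A → Lab) (X : A) : Prop :=
  (∀ b, J.att b X → L b = Lab.OUT) ∧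
  ∀ S B, J.supp S B → X ∈ S → L B ≠ Lab.IN →
    (Safe J L S B X ∨
     ∀ L' : A → Lab, Admissible J L' → geqp (L' B) (L B) →
       ∃ L'' : A → Lab, Admissible J L'' ∧ Extends L' L'' ∧
         legallyIn J L'' X ∧ L'' B = L' B)

/-- Ground-complete labelings: admissible and accepting every forced-IN argument. -/
def GroundComplete (J : JSB A) (L : A → Lab) : Prop :=
  Admissible J L ∧ ∀ X, ForcedIn J L X → L X = Lab.IN

/-- A grounded construction: a transfinite sequence of labelings starting at SIM, at each
successor step accepting one forced-IN argument together with the heads and support children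
of its safe supports and recomputing the OUT-closure, taking unions at limit stages, and
terminating when every forced-IN argument is already IN. -/
structure GConstr (J : JSB A) (α : Ordinal) (f : Ordinal → (A → Lab)) : Prop where
  init : f 0 = SIM J
  succ : ∀ β < α, ∃ X : A,
    ForcedIn J (f β) X ∧ f β X ≠ Lab.IN ∧
    inL (f (β + 1)) =
      inL (f β) ∪ {X} ∪
        {c | ∃ S B, Safe J (f β) S B X ∧ (c = B ∨ c ∈ SC J B)} ∧
    outL (f (β + 1)) = {a | OutCl J (inL (f (β + 1))) a}
  limit : ∀ δ ≤ α, Order.IsSuccLimit δ →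
    inL (f δ) = {a | ∃ β < δ, a ∈ inL (f β)} ∧
    outL (f δ) = {a | ∃ β < δ, a ∈ outL (f β)}
  done : ∀ X, ForcedIn J (f α) X → f α X = Lab.IN

open Set Relation

section TransfiniteIteration

universe u

variable {T : Type u} {s : Set T} {g : Set T → Set T}

noncomputable def transIter (s : Set T) (g : Set T → Set T) (o : Ordinal.{u}) : Set T :=
  Ordinal.limitRecOn o s (fun _ t => g t) fun o _ t => {x | ∃ β, ∃ h : β < o, x ∈ t β h}

@[simp]
theorem transIter_zero : transIter s g 0 = s :=
  Ordinal.limitRecOn_zero ..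

theorem transIter_add_one (o : Ordinal.{u}) : transIter s g (o + 1) = g (transIter s g o) :=
  Ordinal.limitRecOn_add_one ..

theorem transIter_limit {o : Ordinal.{u}} (ho : Order.IsSuccLimit o) :
    transIter s g o = {x | ∃ β < o, x ∈ transIter s g β} := by
  rw [transIter, Ordinal.limitRecOn_limit _ _ _ _ ho]
  simp only [exists_prop]
  rfl

theorem transIter_monotone (hg : ∀ t, t ⊆ g t) : Monotone (transIter s g) := by
  suffices h : ∀ γ, ∀ β ≤ γ, transIter s g β ⊆ transIter s g γ from fun β γ hβγ => h γ β hβγ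
  intro γ
  induction γ using Ordinal.limitRecOn with
  | zero => intro β hβ; rw [nonpos_iff_eq_zero.mp hβ]
  | add_one γ ih =>
    intro β hβ
    rcases hβ.eq_or_lt with rfl | hβ
    · exact subset_rfl
    rw [transIter_add_one]
    exact (ih β (Order.le_of_lt_add_one hβ)).trans (hg _)
  | limit γ hlim _ =>
    intro β hβ
    rcases hβ.eq_or_lt with rfl | hβ
    · exact subset_rfl
    rw [transIter_limit hlim]
    exact fun x hx => ⟨β, hβ, hx⟩

/-- Otherwise the iteration would inject `Ordinal.{u}` into `Set T` (Burali-Forti). -/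
theorem exists_transIter_fixed (hg : ∀ t, t ⊆ g t) :
    ∃ o : Ordinal.{u}, g (transIter s g o) = transIter s g o := by
  by_contra! hne
  have hstrict : StrictMono (transIter s g) := fun β γ hβγ =>
    calc transIter s g β < g (transIter s g β) := (hg _).lt_of_ne (hne β).symm
      _ = transIter s g (β + 1) := (transIter_add_one β).symm
      _ ≤ transIter s g γ := transIter_monotone hg (Order.add_one_le_of_lt hβγ)
  exact not_injective_of_ordinal _ hstrict.injective

end TransfiniteIteration

variable {J : JSB A}

open Classical in
noncomputable def labelOf (J : JSB A) (I : Set A) : A → Lab := fun a =>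
  if a ∈ I then .IN else if OutCl J I a then .OUT else .UNDEC

@[simp]
theorem labelOf_eq_IN {I : Set A} {a : A} : labelOf J I a = .IN ↔ a ∈ I := by
  unfold labelOf; split_ifs <;> simp_all

@[simp]
theorem labelOf_eq_OUT {I : Set A} {a : A} : labelOf J I a = .OUT ↔ OutCl J I a ∧ a ∉ I := by
  unfold labelOf; split_ifs <;> simp_all

theorem labelOf_eq_OUT_or_UNDEC {I : Set A} {a : A} (ha : a ∉ I) :
    labelOf J I a = .OUT ∨ labelOf J I a = .UNDEC := by
  unfold labelOf; split_ifs <;> simp_all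

@[simp]
theorem inL_labelOf {I : Set A} : inL (labelOf J I) = I :=
  ext fun _ => labelOf_eq_IN

theorem SIM_eq_labelOf : SIM J = labelOf J {x | Strict J x} := rfl

theorem OutCl.mono {I I' : Set A} (hI : I ⊆ I') {a : A} (h : OutCl J I a) : OutCl J I' a := by
  induction h with
  | att a b hb hab => exact .att a b (hI hb) hab
  | supp a S c hS ha _ hside ih => exact .supp a S c hS ha ih fun d hd hda => hI (hside d hd hda)

theorem not_outCl_of_forall_reach {I : Set A} {c : A}
    (h : ∀ y, ReflTransGen (sstep J) c y → ∀ d ∈ I, ¬ J.att d y) : ¬ OutCl J I c := by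
  intro hc
  induction hc with
  | att a b hb hab => exact h a .refl b hb hab
  | supp a S c hS ha _ _ ih => exact ih fun y hy => h y (.head ⟨S, hS, ha⟩ hy)

theorem not_outCl_strict (hc : Constructible J) {a : A} (ha : Strict J a) :
    ¬ OutCl J {x | Strict J x} a := by
  intro h
  induction h with
  | att a b _ hab => exact hc.strictUnatt b a ha hab
  | supp a S c hS haS _ hside ih =>
    refine ih (Strict.mk S c hS fun d hd => ?_)
    by_cases hda : d = a
    · exact hda ▸ ha
    · exact hside d hd hda

theorem mLe_eq_IN_of_forall_IN {M : A → Lab} {T : Set A} {l : Lab}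
    (hT : ∀ d ∈ T, M d = .IN) (h : mLe M T l) : l = .IN := by
  rcases h with h | ⟨-, b, hb, h | h⟩ | ⟨-, ⟨b, hb, h⟩ | ⟨b, hb, -, -, -, h, -⟩⟩
  · exact h
  all_goals simp [hT b hb] at h

theorem legallyOut_of_supp {M : A → Lab} {S : Set A} {c a : A}
    (hS : J.supp S c) (ha : a ∈ S) (hside : ∀ d ∈ S, d ≠ a → M d = .IN)
    (hna : M a ≠ .IN) (hc : M c = .OUT) (hlc : legallyOut J M c) : legallyOut J M a := by
  rcases hlc with hatt | ⟨n, S₀, b, hsupp, hlink, hc₀, hend, hout, hside₀, -, hside'⟩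
  · exact Or.inr ⟨0, fun _ => S, fun _ => c, fun _ _ => hS, fun _ h => absurd h (Nat.not_lt_zero _),
      ha, hatt, fun _ _ => hc, hside, hna, fun _ _ _ => by omega⟩
  refine Or.inr ⟨n + 1, fun | 0 => S | i + 1 => S₀ i, fun | 0 => c | i + 1 => b i,
    ?_, ?_, ha, hend, ?_, hside, hna, ?_⟩
  · rintro (_ | i) hi
    exacts [hS, hsupp i (by omega)]
  · rintro (_ | i) hi
    exacts [hc₀, hlink i (by omega)]
  · rintro (_ | i) hi
    exacts [hc, hout i (by omega)]
  · rintro (_ | _ | i) h1 hi d hd hdb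
    · omega
    · exact hside₀ d hd hdb
    · exact hside' (i + 1) (by omega) (by omega) d hd hdb

theorem outCl_of_legallyOut {M : A → Lab} {a : A} (h : legallyOut J M a) :
    OutCl J (inL M) a := by
  rcases h with ⟨b, hab, hb⟩ | ⟨n, S, b, hsupp, hlink, ha, ⟨e, he, heIn⟩, -, hside₀, -, hside⟩
  · exact .att a b hb hab
  have hchain : ∀ i ≤ n, OutCl J (inL M) (b i) := fun i hi => by
    induction hi using Nat.decreasingInduction with
    | self => exact .att _ e heIn he
    | of_succ k hk ih =>
      exact .supp _ _ _ (hsupp (k + 1) hk) (hlink k hk) ih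
        fun d hd hdb => hside (k + 1) (by omega) hk d hd hdb
  exact .supp a (S 0) (b 0) (hsupp 0 n.zero_le) ha (hchain 0 n.zero_le) hside₀

theorem Admissible.eq_OUT_of_outCl {M : A → Lab} (hM : Admissible J M) {I : Set A}
    (hI : I ⊆ inL M) {a : A} (h : OutCl J I a) : M a = .OUT := by
  induction h with
  | att a b hb hab => exact (hM.2.1 a).mpr (Or.inl ⟨b, hab, hI hb⟩)
  | supp a S c hS ha _ hside ih =>
    have hsideIn : ∀ d ∈ S, d ≠ a → M d = .IN := fun d hd hda => hI (hside d hd hda)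
    have hna : M a ≠ .IN := fun haIn => by
      simpa [ih] using mLe_eq_IN_of_forall_IN (fun d hd => hsideIn d hd.1 hd.2)
        ((hM.1 a haIn).2 S c hS ha)
    exact (hM.2.1 a).mpr (legallyOut_of_supp hS ha hsideIn hna ih ((hM.2.1 c).mp ih))

theorem Admissible.outL_eq {M : A → Lab} (hM : Admissible J M) :
    outL M = {a | OutCl J (inL M) a} :=
  ext fun a => ⟨fun h => outCl_of_legallyOut ((hM.2.1 a).mp h), hM.eq_OUT_of_outCl subset_rfl⟩

theorem eq_labelOf_of_outL_eq {M : A → Lab} (h : outL M = {a | OutCl J (inL M) a}) :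
    M = labelOf J (inL M) := by
  funext a
  have hout : M a = .OUT ↔ OutCl J (inL M) a := Set.ext_iff.mp h a
  unfold labelOf
  split_ifs with hin hO
  · exact hin
  · exact hout.mpr hO
  · cases hMa : M a <;> simp_all [inL]

theorem Admissible.ext_of_inL_eq {M N : A → Lab} (hM : Admissible J M) (hN : Admissible J N)
    (h : inL M = inL N) : M = N := by
  rw [eq_labelOf_of_outL_eq hM.outL_eq, eq_labelOf_of_outL_eq hN.outL_eq, h]

structure Coherent (J : JSB A) (I : Set A) : Prop where
  strict_subset : {x | Strict J x} ⊆ I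
  not_outCl : ∀ a ∈ I, ¬ OutCl J I a
  outCl_of_att : ∀ a ∈ I, ∀ b, J.att b a → OutCl J I b
  supp_mem : ∀ S c, J.supp S c → S ⊆ I → c ∈ I

/-- A support-closed set without internal attacks never meets its OUT-closure. -/
theorem Coherent.of_conflictFree {I : Set A} (hstrict : {x | Strict J x} ⊆ I)
    (hatt : ∀ a ∈ I, ∀ b, J.att b a → OutCl J I b) (hfree : ∀ a ∈ I, ∀ b ∈ I, ¬ J.att b a)
    (hsupp : ∀ S c, J.supp S c → S ⊆ I → c ∈ I) : Coherent J I := by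
  refine ⟨hstrict, fun a ha h => ?_, hatt, hsupp⟩
  induction h with
  | att a b hb hab => exact hfree a ha b hb hab
  | supp a S c hS haS _ hside ih =>
    refine ih (hsupp S c hS fun d hd => ?_)
    by_cases hda : d = a
    · exact hda ▸ ha
    · exact hside d hd hda

theorem coherent_strict (hc : Constructible J) : Coherent J {x | Strict J x} where
  strict_subset := subset_rfl
  not_outCl _ := not_outCl_strict hc
  outCl_of_att a ha b hab := absurd hab (hc.strictUnatt b a ha)
  supp_mem S c hS hSI := Strict.mk S c hS hSI

namespace Coherent

variable {I : Set A}

theorem outL_labelOf (hI : Coherent J I) : outL (labelOf J I) = {a | OutCl J I a} :=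
  ext fun a => ⟨fun h => (labelOf_eq_OUT.mp h).1,
    fun h => labelOf_eq_OUT.mpr ⟨h, fun ha => hI.not_outCl a ha h⟩⟩

theorem eq_OUT_iff_legallyOut (hI : Coherent J I) (a : A) :
    labelOf J I a = .OUT ↔ legallyOut J (labelOf J I) a := by
  constructor
  · intro hout
    obtain ⟨h, -⟩ := labelOf_eq_OUT.mp hout
    clear hout
    induction h with
    | att a b hb hab => exact Or.inl ⟨b, hab, labelOf_eq_IN.mpr hb⟩
    | supp a S c hS ha hc hside ih =>
      refine legallyOut_of_supp hS ha (fun d hd hda => labelOf_eq_IN.mpr (hside d hd hda))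
        (fun haI => hI.not_outCl a (labelOf_eq_IN.mp haI) (.supp a S c hS ha hc hside))
        (labelOf_eq_OUT.mpr ⟨hc, fun hcI => hI.not_outCl c hcI hc⟩) ih
  · intro h
    have h := outCl_of_legallyOut h
    rw [inL_labelOf] at h
    exact labelOf_eq_OUT.mpr ⟨h, fun ha => hI.not_outCl a ha h⟩

theorem legallyIn_labelOf (hI : Coherent J I) {a : A} (ha : a ∈ I) :
    legallyIn J (labelOf J I) a := by
  refine ⟨fun b hab => labelOf_eq_OUT.mpr ⟨hI.outCl_of_att a ha b hab,
    fun hb => hI.not_outCl b hb (hI.outCl_of_att a ha b hab)⟩, fun S c hS haS => ?_⟩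
  by_cases hcI : c ∈ I
  · exact Or.inl (labelOf_eq_IN.mpr hcI)
  obtain ⟨d, hdS, hdI⟩ : ∃ d ∈ S, d ∉ I := by
    by_contra! h
    exact hcI (hI.supp_mem S c hS h)
  have hda : d ∈ S \ {a} := ⟨hdS, fun h => hdI (h ▸ ha)⟩
  rcases labelOf_eq_OUT_or_UNDEC hcI with hcO | hcU
  · refine Or.inr (Or.inr ⟨hcO, ?_⟩)
    by_cases hsub : (S \ I).Subsingleton
    · have hdO : OutCl J I d := .supp d S c hS hdS (labelOf_eq_OUT.mp hcO).1
        fun e he hed => by_contra fun heI => hed (hsub ⟨he, heI⟩ ⟨hdS, hdI⟩)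
      exact Or.inl ⟨d, hda, labelOf_eq_OUT.mpr ⟨hdO, hdI⟩⟩
    obtain ⟨d₁, ⟨hd₁S, hd₁I⟩, d₂, ⟨hd₂S, hd₂I⟩, hne⟩ := Set.not_subsingleton_iff.mp hsub
    have hd₁a : d₁ ∈ S \ {a} := ⟨hd₁S, fun h => hd₁I (h ▸ ha)⟩
    have hd₂a : d₂ ∈ S \ {a} := ⟨hd₂S, fun h => hd₂I (h ▸ ha)⟩
    rcases labelOf_eq_OUT_or_UNDEC (J := J) hd₁I with h₁ | h₁
    · exact Or.inl ⟨d₁, hd₁a, h₁⟩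
    rcases labelOf_eq_OUT_or_UNDEC (J := J) hd₂I with h₂ | h₂
    · exact Or.inl ⟨d₂, hd₂a, h₂⟩
    · exact Or.inr ⟨d₁, hd₁a, d₂, hd₂a, hne, h₁, h₂⟩
  · exact Or.inr (Or.inl ⟨hcU, d, hda, (labelOf_eq_OUT_or_UNDEC hdI).symm⟩)

theorem admissible (hI : Coherent J I) : Admissible J (labelOf J I) :=
  ⟨fun _ h => hI.legallyIn_labelOf (labelOf_eq_IN.mp h), hI.eq_OUT_iff_legallyOut,
    fun _ ha => labelOf_eq_IN.mpr (hI.strict_subset ha)⟩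

end Coherent

/-- What a grounded construction accepts along with `X`: heads of safe supports of `X` and
everything they support. -/
def safeReach (J : JSB A) (L : A → Lab) (X : A) : Set A :=
  {c | ∃ S B, Safe J L S B X ∧ ReflTransGen (sstep J) B c}

theorem setOf_safe_eq_safeReach {L : A → Lab} {X : A} :
    {c | ∃ S B, Safe J L S B X ∧ (c = B ∨ c ∈ SC J B)} = safeReach J L X := by
  simp only [safeReach, reflTransGen_iff_eq_or_transGen]
  rfl

theorem Safe.head_mem_safeReach {L : A → Lab} {S : Set A} {B X : A} (h : Safe J L S B X) :
    B ∈ safeReach J L X :=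
  ⟨S, B, h, .refl⟩

theorem mem_safeReach_of_sstep {L : A → Lab} {X c c' : A} (hc : c ∈ safeReach J L X)
    (h : sstep J c c') : c' ∈ safeReach J L X :=
  let ⟨S, B, hsafe, hB⟩ := hc
  ⟨S, B, hsafe, hB.tail h⟩

theorem attacker_eq_OUT_of_mem_safeReach {L : A → Lab} {X c y d : A}
    (hc : c ∈ safeReach J L X) (hy : ReflTransGen (sstep J) c y) (hd : J.att d y) :
    L d = .OUT :=
  let ⟨_, _, hsafe, hB⟩ := hc
  hsafe.2.2 y (reflTransGen_iff_eq_or_transGen.mp (hB.trans hy)) d hd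

theorem not_outCl_of_mem_safeReach {I : Set A} {X c : A}
    (hc : c ∈ safeReach J (labelOf J I) X) : ¬ OutCl J I c :=
  not_outCl_of_forall_reach fun _ hy _ hdI hd =>
    (labelOf_eq_OUT.mp (attacker_eq_OUT_of_mem_safeReach hc hy hd)).2 hdI

theorem Extends.geqp {L M : A → Lab} (h : Extends L M) (a : A) : geqp (M a) (L a) := by
  cases hL : L a
  · exact Or.inr (h.1 hL)
  · exact Or.inr (h.2 hL)
  · exact Or.inl rfl

theorem geqp_trans {l₁ l₂ l₃ : Lab} (h₁₂ : geqp l₁ l₂) (h₂₃ : geqp l₂ l₃) : geqp l₁ l₃ := by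
  rcases h₂₃ with h | rfl
  · exact Or.inl h
  · exact h₁₂

theorem Admissible.extends_labelOf {M : A → Lab} (hM : Admissible J M) {I : Set A}
    (hI : I ⊆ inL M) : Extends (labelOf J I) M :=
  ⟨fun _ h => hI (labelOf_eq_IN.mp h), fun _ h => hM.eq_OUT_of_outCl hI (labelOf_eq_OUT.mp h).1⟩

theorem ForcedIn.mono {L M : A → Lab} {X : A} (hX : ForcedIn J L X) (h : Extends L M) :
    ForcedIn J M X := by
  refine ⟨fun b hb => h.2 (hX.1 b hb), fun S B hS hXS hB => ?_⟩
  rcases hX.2 S B hS hXS fun hL => hB (h.1 hL) with hsafe | hext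
  · exact Or.inl ⟨hsafe.1, hsafe.2.1, fun y hy d hd => h.2 (hsafe.2.2 y hy d hd)⟩
  · exact Or.inr fun L' hL' hge => hext L' hL' (geqp_trans hge (h.geqp B))

theorem forcedIn_of_mem_safeReach {L M : A → Lab} {X a : A} (h : Extends L M)
    (ha : a ∈ safeReach J L X) : ForcedIn J M a := by
  refine ⟨fun b hb => h.2 (attacker_eq_OUT_of_mem_safeReach ha .refl hb),
    fun S C hS haS _ => Or.inl ⟨haS, hS, fun y hy d hd => h.2 ?_⟩⟩
  exact attacker_eq_OUT_of_mem_safeReach ha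
    (.head ⟨S, hS, haS⟩ (reflTransGen_iff_eq_or_transGen.mpr hy)) hd

/-- The second alternative of `ForcedIn`, applied to `labelOf J I` itself, would make `c` legally
IN in an extension that keeps the label of `c`, so only safety is left. -/
theorem ForcedIn.safe_of_supp {I : Set A} (hI : Coherent J I) {X c : A} {S : Set A}
    (hX : ForcedIn J (labelOf J I) X) (hS : J.supp S c) (hXS : X ∈ S)
    (hside : ∀ d ∈ S, d ≠ X → d ∈ I) (hc : c ∉ I) : Safe J (labelOf J I) S c X := by
  refine (hX.2 S c hS hXS (mt labelOf_eq_IN.mp hc)).resolve_right fun hext => hc ?_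
  obtain ⟨L, -, hL, hXL, hcL⟩ := hext _ hI.admissible (Or.inr rfl)
  have hcIn := mLe_eq_IN_of_forall_IN (fun d hd => hL.1 (labelOf_eq_IN.mpr (hside d hd.1 hd.2)))
    (hXL.2 S c hS hXS)
  rwa [hcL, labelOf_eq_IN] at hcIn

theorem ForcedIn.not_outCl {I : Set A} (hI : Coherent J I) {X : A}
    (hX : ForcedIn J (labelOf J I) X) : ¬ OutCl J I X := by
  rintro (⟨_, b, hb, hab⟩ | ⟨_, S, c, hS, hXS, hc, hside⟩)
  · exact (labelOf_eq_OUT.mp (hX.1 b hab)).2 hb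
  · exact not_outCl_of_mem_safeReach
      (hX.safe_of_supp hI hS hXS hside fun hcI => hI.not_outCl c hcI hc).head_mem_safeReach hc

theorem Coherent.step {I : Set A} (hI : Coherent J I) {X : A}
    (hX : ForcedIn J (labelOf J I) X) :
    Coherent J (I ∪ {X} ∪ safeReach J (labelOf J I) X) := by
  set I' := I ∪ {X} ∪ safeReach J (labelOf J I) X
  have hII' : I ⊆ I' := fun a ha => Or.inl (Or.inl ha)
  have hnotOut : ∀ b ∈ I', ¬ OutCl J I b := by
    rintro b ((hb | rfl) | hb)
    exacts [hI.not_outCl b hb, hX.not_outCl hI, not_outCl_of_mem_safeReach hb]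
  have hatt : ∀ a ∈ I', ∀ b, J.att b a → OutCl J I b := by
    rintro a ((ha | rfl) | ha) b hab
    · exact hI.outCl_of_att a ha b hab
    · exact (labelOf_eq_OUT.mp (hX.1 b hab)).1
    · exact (labelOf_eq_OUT.mp (attacker_eq_OUT_of_mem_safeReach ha .refl hab)).1
  refine .of_conflictFree (hI.strict_subset.trans hII')
    (fun a ha b hab => (hatt a ha b hab).mono hII')
    (fun a ha b hb hab => hnotOut b hb (hatt a ha b hab)) fun S c hS hSI' => ?_
  by_cases hreach : ∃ d ∈ S, d ∈ safeReach J (labelOf J I) X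
  · obtain ⟨d, hdS, hd⟩ := hreach
    exact Or.inr (mem_safeReach_of_sstep hd ⟨S, hS, hdS⟩)
  push Not at hreach
  have hside : ∀ d ∈ S, d ≠ X → d ∈ I := fun d hd hdX => by
    rcases hSI' hd with (h | h) | h
    exacts [h, absurd h hdX, absurd h (hreach d hd)]
  by_cases hcI : c ∈ I
  · exact hII' hcI
  by_cases hXS : X ∈ S
  · exact Or.inr (hX.safe_of_supp hI hS hXS hside hcI).head_mem_safeReach
  · exact absurd (hI.supp_mem S c hS fun d hd => hside d hd fun h => hXS (h ▸ hd)) hcI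

theorem GroundComplete.step_subset {M : A → Lab} (hM : GroundComplete J M) {I : Set A}
    (hI : I ⊆ inL M) {X : A} (hX : ForcedIn J (labelOf J I) X) :
    I ∪ {X} ∪ safeReach J (labelOf J I) X ⊆ inL M := by
  have hext := hM.1.extends_labelOf hI
  rintro a ((ha | rfl) | ha)
  exacts [hI ha, hM.2 a (hX.mono hext), hM.2 a (forcedIn_of_mem_safeReach hext ha)]

section Limit

variable {F : Ordinal → Set A} {δ : Ordinal}

theorem subset_setOf_exists_lt {β : Ordinal} (hβ : β < δ) : F β ⊆ {x | ∃ β < δ, x ∈ F β} :=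
  fun _ hx => ⟨β, hβ, hx⟩

theorem exists_lt_subset_of_finite (hδ : 0 < δ) (hF : MonotoneOn F (Iio δ)) {S : Set A}
    (hS : S.Finite) (hsub : S ⊆ {x | ∃ β < δ, x ∈ F β}) : ∃ γ < δ, S ⊆ F γ := by
  have hdir : DirectedOn (fun β γ => F β ⊆ F γ) (Iio δ) := fun β hβ γ hγ => by
    have hmax : max β γ ∈ Iio δ := max_lt (mem_Iio.mp hβ) (mem_Iio.mp hγ)
    exact ⟨max β γ, hmax, hF hβ hmax (le_max_left β γ), hF hγ hmax (le_max_right β γ)⟩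
  simpa using hdir.exists_mem_subset_of_finset_subset_biUnion (s := hS.toFinset) ⟨0, hδ⟩
    (by simpa [subset_def] using hsub)

theorem outCl_setOf_exists_lt_iff (hfin : ∀ S b, J.supp S b → S.Finite) (hδ : 0 < δ)
    (hF : MonotoneOn F (Iio δ)) {a : A} :
    OutCl J {x | ∃ β < δ, x ∈ F β} a ↔ ∃ β < δ, OutCl J (F β) a := by
  refine ⟨fun h => ?_, fun ⟨β, hβ, h⟩ => h.mono (subset_setOf_exists_lt hβ)⟩
  induction h with
  | att a b hb hab =>
    obtain ⟨β, hβ, hbF⟩ := hb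
    exact ⟨β, hβ, .att a b hbF hab⟩
  | supp a S c hS ha _ hside ih =>
    obtain ⟨β, hβ, hc⟩ := ih
    obtain ⟨γ, hγ, hSγ⟩ := exists_lt_subset_of_finite hδ hF ((hfin S c hS).subset sdiff_subset)
      fun d hd => hside d hd.1 hd.2
    have hmax : max β γ ∈ Iio δ := max_lt hβ hγ
    exact ⟨max β γ, hmax, .supp a S c hS ha (hc.mono (hF hβ hmax (le_max_left β γ)))
      fun d hd hda => hF hγ hmax (le_max_right β γ) (hSγ ⟨hd, hda⟩)⟩

theorem Coherent.setOf_exists_lt (hfin : ∀ S b, J.supp S b → S.Finite) (hδ : 0 < δ)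
    (hF : MonotoneOn F (Iio δ)) (hcoh : ∀ β < δ, Coherent J (F β)) :
    Coherent J {x | ∃ β < δ, x ∈ F β} := by
  refine .of_conflictFree ((hcoh 0 hδ).strict_subset.trans (subset_setOf_exists_lt hδ)) ?_ ?_ ?_
  · rintro a ⟨β, hβ, ha⟩ b hab
    exact ((hcoh β hβ).outCl_of_att a ha b hab).mono (subset_setOf_exists_lt hβ)
  · rintro a ⟨β, hβ, ha⟩ b ⟨γ, hγ, hb⟩ hab
    have hmax : max β γ ∈ Iio δ := max_lt hβ hγ
    have hb' := hF hγ hmax (le_max_right β γ) hb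
    exact (hcoh _ hmax).not_outCl b hb'
      ((hcoh _ hmax).outCl_of_att a (hF hβ hmax (le_max_left β γ) ha) b hab)
  · intro S c hS hSF
    obtain ⟨γ, hγ, hSγ⟩ := exists_lt_subset_of_finite hδ hF (hfin S c hS) hSF
    exact subset_setOf_exists_lt hγ ((hcoh γ hγ).supp_mem S c hS hSγ)

end Limit

namespace GConstr

variable {α : Ordinal} {f : Ordinal → A → Lab}

theorem exists_step (hf : GConstr J α f) {β : Ordinal} (hβ : β < α)
    (hfβ : f β = labelOf J (inL (f β))) :
    ∃ X, ForcedIn J (labelOf J (inL (f β))) X ∧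
      inL (f (β + 1)) = inL (f β) ∪ {X} ∪ safeReach J (labelOf J (inL (f β))) X ∧
      outL (f (β + 1)) = {a | OutCl J (inL (f (β + 1))) a} := by
  obtain ⟨X, hX, -, hin, hout⟩ := hf.succ β hβ
  rw [setOf_safe_eq_safeReach, hfβ, inL_labelOf] at hin
  rw [hfβ] at hX
  exact ⟨X, hX, hin, hout⟩

theorem monotoneOn_inL (hf : GConstr J α f) : MonotoneOn (fun β => inL (f β)) (Iic α) := by
  suffices h : ∀ β ≤ α, ∀ γ ≤ β, inL (f γ) ⊆ inL (f β) from fun γ _ β hβ hγβ => h β hβ γ hγβ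
  intro β
  induction β using Ordinal.limitRecOn with
  | zero => intro _ γ hγ; rw [nonpos_iff_eq_zero.mp hγ]
  | add_one β ih =>
    intro hβ γ hγ
    obtain ⟨X, -, -, hin, -⟩ := hf.succ β (Order.add_one_le_iff.mp hβ)
    rcases hγ.eq_or_lt with rfl | hγ
    · exact subset_rfl
    refine (ih (Order.add_one_le_iff.mp hβ).le γ (Order.le_of_lt_add_one hγ)).trans ?_
    rw [hin]
    exact fun x hx => Or.inl (Or.inl hx)
  | limit β hlim _ =>
    intro hβ γ hγ
    rcases hγ.eq_or_lt with rfl | hγ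
    · exact subset_rfl
    rw [(hf.limit β hβ hlim).1]
    exact fun x hx => ⟨γ, hγ, hx⟩

theorem coherent (hc : Constructible J) (hf : GConstr J α f) :
    ∀ β ≤ α, Coherent J (inL (f β)) ∧ f β = labelOf J (inL (f β)) := by
  intro β
  induction β using Ordinal.limitRecOn with
  | zero =>
    intro _
    rw [hf.init, SIM_eq_labelOf, inL_labelOf]
    exact ⟨coherent_strict hc, rfl⟩
  | add_one β ih =>
    intro hβ
    have hβα := Order.add_one_le_iff.mp hβ
    obtain ⟨hcoh, hfβ⟩ := ih hβα.le
    obtain ⟨X, hX, hin, hout⟩ := hf.exists_step hβα hfβ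
    exact ⟨hin ▸ hcoh.step hX, eq_labelOf_of_outL_eq hout⟩
  | limit β hlim ih =>
    intro hβ
    obtain ⟨hin, hout⟩ := hf.limit β hβ hlim
    have hmono : MonotoneOn (fun γ => inL (f γ)) (Iio β) :=
      hf.monotoneOn_inL.mono fun γ hγ => (mem_Iio.mp hγ).le.trans hβ
    have houtγ : ∀ γ < β, outL (f γ) = {a | OutCl J (inL (f γ)) a} := fun γ hγ => by
      obtain ⟨hcoh, hfγ⟩ := ih γ hγ (hγ.le.trans hβ)
      have h := hcoh.outL_labelOf
      rwa [← hfγ] at h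
    refine ⟨hin ▸ Coherent.setOf_exists_lt hc.finSupp hlim.pos hmono
      fun γ hγ => (ih γ hγ (hγ.le.trans hβ)).1, eq_labelOf_of_outL_eq ?_⟩
    ext a
    rw [hout, hin]
    change (∃ γ < β, a ∈ outL (f γ)) ↔ OutCl J {x | ∃ γ < β, x ∈ inL (f γ)} a
    rw [outCl_setOf_exists_lt_iff hc.finSupp hlim.pos hmono]
    exact exists_congr fun γ => and_congr_right fun hγ => Set.ext_iff.mp (houtγ γ hγ) a

theorem subset_inL_of_groundComplete (hc : Constructible J) (hf : GConstr J α f)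
    {M : A → Lab} (hM : GroundComplete J M) : ∀ β ≤ α, inL (f β) ⊆ inL M := by
  intro β
  induction β using Ordinal.limitRecOn with
  | zero =>
    intro _
    rw [hf.init, SIM_eq_labelOf, inL_labelOf]
    exact fun x hx => hM.1.2.2 x hx
  | add_one β ih =>
    intro hβ
    have hβα := Order.add_one_le_iff.mp hβ
    obtain ⟨X, hX, hin, -⟩ := hf.exists_step hβα (hf.coherent hc β hβα.le).2
    rw [hin]
    exact hM.step_subset (ih hβα.le) hX
  | limit β hlim ih =>
    intro hβ
    rw [(hf.limit β hβ hlim).1]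
    rintro x ⟨γ, hγ, hx⟩
    exact ih γ hγ (hγ.le.trans hβ) hx

theorem groundComplete_isLeast (hc : Constructible J) (hf : GConstr J α f) :
    GroundComplete J (f α) ∧ ∀ M, GroundComplete J M → inL (f α) ⊆ inL M := by
  obtain ⟨hcoh, hfα⟩ := hf.coherent hc α le_rfl
  exact ⟨⟨hfα ▸ hcoh.admissible, hf.done⟩,
    fun M hM => hf.subset_inL_of_groundComplete hc hM α le_rfl⟩

end GConstr

open Classical in
noncomputable def groundedStep (J : JSB A) (I : Set A) : Set A :=
  if h : ∃ X, ForcedIn J (labelOf J I) X ∧ X ∉ I then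
    I ∪ {h.choose} ∪ safeReach J (labelOf J I) h.choose
  else I

theorem subset_groundedStep (I : Set A) : I ⊆ groundedStep J I := by
  unfold groundedStep
  split
  · exact fun x hx => Or.inl (Or.inl hx)
  · exact subset_rfl

theorem mem_of_forcedIn_of_groundedStep_eq {I : Set A} (hI : groundedStep J I = I) {X : A}
    (hX : ForcedIn J (labelOf J I) X) : X ∈ I := by
  by_contra hXI
  have h : ∃ X, ForcedIn J (labelOf J I) X ∧ X ∉ I := ⟨X, hX, hXI⟩
  have hmem : h.choose ∈ groundedStep J I := by
    rw [groundedStep, dif_pos h]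
    exact Or.inl (Or.inr rfl)
  rw [hI] at hmem
  exact h.choose_spec.2 hmem

theorem Coherent.groundedStep {I : Set A} (hI : Coherent J I) : Coherent J (groundedStep J I) := by
  unfold G.groundedStep
  split
  · next h => exact hI.step h.choose_spec.1
  · exact hI

noncomputable def groundedIter (J : JSB A) (o : Ordinal.{0}) : Set A :=
  transIter {x | Strict J x} (groundedStep J) o

theorem groundedIter_add_one (o : Ordinal.{0}) :
    groundedIter J (o + 1) = groundedStep J (groundedIter J o) :=
  transIter_add_one o

theorem groundedIter_limit {o : Ordinal.{0}} (ho : Order.IsSuccLimit o) :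
    groundedIter J o = {x | ∃ β < o, x ∈ groundedIter J β} :=
  transIter_limit ho

theorem groundedIter_monotone : Monotone (groundedIter J) :=
  transIter_monotone subset_groundedStep

theorem coherent_groundedIter (hc : Constructible J) (o : Ordinal.{0}) :
    Coherent J (groundedIter J o) := by
  induction o using Ordinal.limitRecOn with
  | zero => rw [groundedIter, transIter_zero]; exact coherent_strict hc
  | add_one o ih => rw [groundedIter_add_one]; exact ih.groundedStep
  | limit o hlim ih =>
    rw [groundedIter_limit hlim]
    exact .setOf_exists_lt hc.finSupp hlim.pos (groundedIter_monotone.monotoneOn _) ih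

/-- Run `groundedStep` up to its least fixed point. -/
theorem exists_gConstr (hc : Constructible J) : ∃ (α : Ordinal.{0}) (f : Ordinal → A → Lab),
    GConstr J α f := by
  let stall := {o : Ordinal.{0} | groundedStep J (groundedIter J o) = groundedIter J o}
  have hstall : stall.Nonempty := exists_transIter_fixed subset_groundedStep
  have hI : ∀ o, outL (labelOf J (groundedIter J o)) = {a | OutCl J (groundedIter J o) a} :=
    fun o => (coherent_groundedIter hc o).outL_labelOf
  refine ⟨sInf stall, fun o => labelOf J (groundedIter J o), ⟨?_, ?_, ?_, ?_⟩⟩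
  · simp [groundedIter, SIM_eq_labelOf]
  · intro β hβ
    have h : ∃ X, ForcedIn J (labelOf J (groundedIter J β)) X ∧ X ∉ groundedIter J β := by
      by_contra h
      exact notMem_of_lt_csInf hβ (OrderBot.bddBelow _)
        (show groundedStep J (groundedIter J β) = groundedIter J β by rw [groundedStep, dif_neg h])
    refine ⟨h.choose, h.choose_spec.1, mt labelOf_eq_IN.mp h.choose_spec.2, ?_, ?_⟩
    · rw [inL_labelOf, inL_labelOf, setOf_safe_eq_safeReach, groundedIter_add_one, groundedStep,
        dif_pos h]
    · rw [hI, inL_labelOf]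
  · intro δ _ hlim
    refine ⟨by simp only [inL_labelOf, groundedIter_limit hlim], ?_⟩
    simp only [hI]
    rw [groundedIter_limit hlim]
    ext a
    exact outCl_setOf_exists_lt_iff hc.finSupp hlim.pos (groundedIter_monotone.monotoneOn _)
  · intro X hX
    exact labelOf_eq_IN.mpr (mem_of_forcedIn_of_groundedStep_eq (csInf_mem hstall) hX)

end G

open G in
/-- In a JSBAF without preferences satisfying the Deductive ASPIC⊖
constructibility conditions, the grounded labeling exists and is unique: there is exactly one
ground-complete labeling whose IN-set is ⊆-minimal among ground-complete labelings; moreover,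
the result of every grounded construction equals this labeling. -/
theorem grounded_exists_unique {A : Type} (J : JSB A) (hc : Constructible J) :
    ∃ L : A → Lab,
      (GroundComplete J L ∧
        ∀ L' : A → Lab, GroundComplete J L' → ¬ (inL L' ⊂ inL L)) ∧
      (∀ L' : A → Lab,
        (GroundComplete J L' ∧ ∀ L'' : A → Lab, GroundComplete J L'' → ¬ (inL L'' ⊂ inL L')) →
        L' = L) ∧
      (∀ (α : Ordinal) (f : Ordinal → (A → Lab)), GConstr J α f → f α = L) := by
  obtain ⟨α₀, f₀, hf₀⟩ := exists_gConstr hc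
  obtain ⟨hL, hleast⟩ := hf₀.groundComplete_isLeast hc
  have eq_of_inL_subset : ∀ M, GroundComplete J M → inL M ⊆ inL (f₀ α₀) → M = f₀ α₀ :=
    fun M hM hsub => hM.1.ext_of_inL_eq hL.1 (hsub.antisymm (hleast M hM))
  refine ⟨f₀ α₀, ⟨hL, fun M hM hlt => hlt.2 (hleast M hM)⟩, fun M ⟨hM, hmin⟩ => ?_,
    fun α f hf => ?_⟩
  · exact eq_of_inL_subset M hM
      (eq_of_le_of_not_lt (hleast M hM) (hmin _ hL)).symm.subset
  · obtain ⟨hfL, hfleast⟩ := hf.groundComplete_isLeast hc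
    exact eq_of_inL_subset _ hfL (hfleast _ hL)
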